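/- arXiv:2501.17205 — 8 statements merged into one kernel-verified Lean document; each statement's English description precedes it below -/
import Mathlib

section
/- For any finite sequence of predictions p_1,...,p_T ∈ [0,1], contexts x_1,...,x_T, and outcomes y_1,...,y_T ∈ {0,1}, the Decision OI error with respect to the class of all bounded losses equals the proper calibration error: sup over bounded losses ℓ of |Σ_t (ℓ(k_ℓ(p_t(x_t)), y_t) − E_{ỹ~Ber(p_t(x_t))}[ℓ(k_ℓ(p_t(x_t)), ỹ)])| equals sup over proper losses ℓ of |Σ_t Δℓ(p_t(x_t))·(y_t − p_t(x_t))|. -/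
open Set Finset

/-- For any finite sequence of predictions, contexts, and binary
outcomes, the Decision OI error with respect to all bounded losses (together
with their optimal post-processings `k_ℓ`) equals the proper calibration error.
Expectations under `Ber(p)` are written out as `p·ℓ(·,1) + (1-p)·ℓ(·,0)`. -/
theorem decOI_eq_properCal {X : Type*} (T : ℕ)
    (p : Fin T → X → ℝ) (x : Fin T → X) (y : Fin T → ℝ)
    (hp : ∀ t, p t (x t) ∈ Icc (0:ℝ) 1)
    (hy : ∀ t, y t ∈ ({0, 1} : Set ℝ)) :
    sSup { s : ℝ | ∃ (ℓ : ℝ → ℝ → ℝ) (k : ℝ → ℝ),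
        (∀ q ∈ Icc (0:ℝ) 1, ∀ b ∈ ({0, 1} : Set ℝ), ℓ q b ∈ Icc (-1:ℝ) 1) ∧
        (∀ v ∈ Icc (0:ℝ) 1, k v ∈ Icc (0:ℝ) 1 ∧
          ∀ q ∈ Icc (0:ℝ) 1,
            v * ℓ (k v) 1 + (1 - v) * ℓ (k v) 0 ≤ v * ℓ q 1 + (1 - v) * ℓ q 0) ∧
        s = |∑ t, (ℓ (k (p t (x t))) (y t) -
              (p t (x t) * ℓ (k (p t (x t))) 1 +
                (1 - p t (x t)) * ℓ (k (p t (x t))) 0))| }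
    =
    sSup { s : ℝ | ∃ ℓ : ℝ → ℝ → ℝ,
        (∀ q ∈ Icc (0:ℝ) 1, ∀ b ∈ ({0, 1} : Set ℝ), ℓ q b ∈ Icc (-1:ℝ) 1) ∧
        (∀ v ∈ Icc (0:ℝ) 1, ∀ q ∈ Icc (0:ℝ) 1,
          v * ℓ v 1 + (1 - v) * ℓ v 0 ≤ v * ℓ q 1 + (1 - v) * ℓ q 0) ∧
        s = |∑ t, (ℓ (p t (x t)) 1 - ℓ (p t (x t)) 0) * (y t - p t (x t))| } := by
  congr 1
  ext s
  constructor
  · rintro ⟨ℓ, k, hb, hk, rfl⟩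
    refine ⟨fun q b => ℓ (k q) b, ?_, ?_, ?_⟩
    · intro q hq b hbmem
      exact hb (k q) ((hk q hq).1) b hbmem
    · intro v hv q hq
      exact (hk v hv).2 (k q) ((hk q hq).1)
    · congr 1
      apply Finset.sum_congr rfl
      intro t _
      rcases hy t with h0 | h1
      · rw [h0]; ring
      · rw [Set.mem_singleton_iff] at h1; rw [h1]; ring
  · rintro ⟨ℓ, hb, hprop, rfl⟩
    refine ⟨ℓ, id, hb, ?_, ?_⟩
    · intro v hv
      exact ⟨hv, hprop v hv⟩
    · congr 1
      apply Finset.sum_congr rfl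
      intro t _
      rcases hy t with h0 | h1
      · rw [h0]; simp; ring
      · rw [Set.mem_singleton_iff] at h1; rw [h1]; simp; ring
end

section
/- For any finite sequence of predictions p_t ∈ [0,1], contexts x_t, and outcomes y_t ∈ {0,1} (t = 1,...,T): the threshold-weighted calibration error is at most the proper calibration error, which in turn is at most twice the threshold-weighted calibration error. Here the threshold-weighted calibration error is sup_{v ∈ [0,1]} |Σ_t sgn(v − p_t(x_t))·(y_t − p_t(x_t))| and the proper calibration error is sup over proper losses ℓ of |Σ_t Δℓ(p_t(x_t))·(y_t − p_t(x_t))|. -/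
open Set Finset

/-- Sign function with the convention `sgn 0 = 1`. -/
noncomputable def sgn (z : ℝ) : ℝ := if 0 ≤ z then 1 else -1

lemma sgn_nonneg_eq (z : ℝ) (h : 0 ≤ z) : sgn z = 1 := if_pos h
lemma sgn_neg_eq (z : ℝ) (h : z < 0) : sgn z = -1 := if_neg (not_le.mpr h)

lemma tele (f : ℕ → ℝ) (a b : ℕ) (h : a ≤ b) :
    ∑ k ∈ Finset.Ico a b, (f k - f (k+1)) = f a - f b := by
  induction b, h using Nat.le_induction with
  | base => simp
  | succ b hb ih => rw [Finset.sum_Ico_succ_top hb, ih]; ring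

lemma key (T : ℕ) (P w : Fin T → ℝ) (hP : ∀ t, P t ∈ Icc (0:ℝ) 1)
    (h : ℝ → ℝ)
    (hmono : ∀ a ∈ Icc (0:ℝ) 1, ∀ b ∈ Icc (0:ℝ) 1, a ≤ b → h b ≤ h a)
    (hbd : ∀ a ∈ Icc (0:ℝ) 1, |h a| ≤ 2)
    (A : ℝ) (hA : ∀ v ∈ Icc (0:ℝ) 1, |∑ t, sgn (v - P t) * w t| ≤ A) :
    |∑ t, h (P t) * w t| ≤ 2 * A := by
  have hA0 : 0 ≤ A := le_trans (abs_nonneg _) (hA 1 ⟨zero_le_one, le_refl _⟩)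
  rcases Nat.eq_zero_or_pos T with hT | hT
  · subst hT; simp; linarith
  -- setup
  set Q : Finset ℝ := Finset.image P Finset.univ with hQ
  have hQne : Q.Nonempty := ⟨P ⟨0, hT⟩, Finset.mem_image.mpr ⟨⟨0, hT⟩, Finset.mem_univ _, rfl⟩⟩
  set m : ℕ := Q.card with hmdef
  have hm : 0 < m := Finset.card_pos.mpr hQne
  set e := Q.orderIsoOfFin (rfl : Q.card = m) with he
  set val : ℕ → ℝ := fun n => (e ⟨min n (m-1), by omega⟩ : ℝ) with hval
  have hvalmem : ∀ n, val n ∈ Icc (0:ℝ) 1 := by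
    intro n
    obtain ⟨t, _, ht⟩ := Finset.mem_image.mp (e ⟨min n (m-1), by omega⟩).2
    have h2 : val n = P t := ht.symm
    rw [h2]; exact hP t
  have hvalmono : ∀ i k, i ≤ k → val i ≤ val k := by
    intro i k hik
    apply e.monotone
    simp [Fin.le_def]
    omega
  have hvalstrict : ∀ i k, i < k → k ≤ m - 1 → val i < val k := by
    intro i k hik hk
    apply e.strictMono
    simp [Fin.lt_def]
    omega
  have hidx : ∀ t, ∃ i, i ≤ m - 1 ∧ val i = P t := by
    intro t
    have hmem : P t ∈ Q := Finset.mem_image.mpr ⟨t, Finset.mem_univ _, rfl⟩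
    set j := e.symm ⟨P t, hmem⟩ with hj
    refine ⟨j.1, by omega, ?_⟩
    have : min j.1 (m-1) = j.1 := by omega
    rw [hval]; simp only [this]
    have : e ⟨j.1, j.2⟩ = ⟨P t, hmem⟩ := by
      rw [hj]; simp [Fin.eta]
    rw [this]
  set Hn : ℕ → ℝ := fun n => h (val n) with hHn
  have hd : ∀ k, k + 1 ≤ m - 1 → 0 ≤ Hn k - Hn (k+1) := by
    intro k hk
    have := hmono (val k) (hvalmem _) (val (k+1)) (hvalmem _)
      (le_of_lt (hvalstrict k (k+1) (by omega) hk))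
    simpa [hHn] using sub_nonneg.mpr this
  set c₀ : ℝ := (Hn 0 + Hn (m-1))/2 with hc₀
  -- per-t identity
  have hper : ∀ t, h (P t) = c₀ + (1/2) * ∑ k ∈ Finset.range (m-1),
      (Hn k - Hn (k+1)) * sgn (val k - P t) := by
    intro t
    obtain ⟨i, hi, hvi⟩ := hidx t
    have hsplit : ∑ k ∈ Finset.range (m-1), (Hn k - Hn (k+1)) * sgn (val k - P t)
        = ∑ k ∈ Finset.Ico 0 i, (Hn k - Hn (k+1)) * sgn (val k - P t)
          + ∑ k ∈ Finset.Ico i (m-1), (Hn k - Hn (k+1)) * sgn (val k - P t) := by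
      rw [Finset.range_eq_Ico, ← Finset.sum_Ico_consecutive _ (Nat.zero_le i) hi]
    have h1 : ∑ k ∈ Finset.Ico 0 i, (Hn k - Hn (k+1)) * sgn (val k - P t)
        = -(Hn 0 - Hn i) := by
      rw [← tele Hn 0 i (Nat.zero_le i), ← Finset.sum_neg_distrib]
      apply Finset.sum_congr rfl
      intro k hk
      rw [Finset.mem_Ico] at hk
      have hlt : val k < P t := by
        rw [← hvi]; exact hvalstrict k i hk.2 hi
      rw [sgn_neg_eq _ (by linarith)]; ring
    have h2 : ∑ k ∈ Finset.Ico i (m-1), (Hn k - Hn (k+1)) * sgn (val k - P t)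
        = Hn i - Hn (m-1) := by
      rw [← tele Hn i (m-1) hi]
      apply Finset.sum_congr rfl
      intro k hk
      rw [Finset.mem_Ico] at hk
      have hle : P t ≤ val k := by rw [← hvi]; exact hvalmono i k hk.1
      rw [sgn_nonneg_eq _ (by linarith)]; ring
    rw [hsplit, h1, h2, hc₀, ← hvi]
    show h (val i) = _
    rw [hHn]
    ring
  -- total
  have htot : ∑ t, h (P t) * w t
      = c₀ * (∑ t, sgn (1 - P t) * w t)
        + (1/2) * ∑ k ∈ Finset.range (m-1),
            (Hn k - Hn (k+1)) * (∑ t, sgn (val k - P t) * w t) := by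
    have hone : ∀ t : Fin T, sgn (1 - P t) = 1 := fun t =>
      sgn_nonneg_eq _ (by have := (hP t).2; linarith)
    calc ∑ t, h (P t) * w t
        = ∑ t, (c₀ * (sgn (1 - P t) * w t)
            + (1/2) * ∑ k ∈ Finset.range (m-1),
                (Hn k - Hn (k+1)) * (sgn (val k - P t) * w t)) := by
          apply Finset.sum_congr rfl
          intro t _
          rw [hper t, hone t, add_mul]
          congr 1
          · ring
          · rw [mul_assoc, Finset.sum_mul]
            congr 1
            apply Finset.sum_congr rfl
            intro k _; ring
      _ = _ := by
          rw [Finset.sum_add_distrib, ← Finset.mul_sum, ← Finset.mul_sum,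
            Finset.sum_comm]
          congr 1
          congr 1
          apply Finset.sum_congr rfl
          intro k _
          rw [← Finset.mul_sum]
  rw [htot]
  have hSb : ∀ v ∈ Icc (0:ℝ) 1, |∑ t, sgn (v - P t) * w t| ≤ A := hA
  have hb1 : |c₀ * (∑ t, sgn (1 - P t) * w t)| ≤ |c₀| * A := by
    rw [abs_mul]
    exact mul_le_mul_of_nonneg_left (hSb 1 ⟨zero_le_one, le_refl _⟩) (abs_nonneg _)
  have hb2 : |∑ k ∈ Finset.range (m-1),
      (Hn k - Hn (k+1)) * (∑ t, sgn (val k - P t) * w t)|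
      ≤ (Hn 0 - Hn (m-1)) * A := by
    calc _ ≤ ∑ k ∈ Finset.range (m-1),
        |(Hn k - Hn (k+1)) * (∑ t, sgn (val k - P t) * w t)| :=
          Finset.abs_sum_le_sum_abs _ _
      _ ≤ ∑ k ∈ Finset.range (m-1), (Hn k - Hn (k+1)) * A := by
          apply Finset.sum_le_sum
          intro k hk
          rw [Finset.mem_range] at hk
          have hdk := hd k (by omega)
          rw [abs_mul, abs_of_nonneg hdk]
          exact mul_le_mul_of_nonneg_left (hSb (val k) (hvalmem k)) hdk
      _ = (Hn 0 - Hn (m-1)) * A := by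
          rw [← Finset.sum_mul, Finset.range_eq_Ico, tele Hn 0 (m-1) (Nat.zero_le _)]
  have hH0 := abs_le.mp (hbd (val 0) (hvalmem 0))
  have hHm := abs_le.mp (hbd (val (m-1)) (hvalmem (m-1)))
  have hHge : Hn (m-1) ≤ Hn 0 := by
    rcases Nat.eq_zero_or_pos (m-1) with h0 | h0
    · rw [h0]
    · exact hmono (val 0) (hvalmem 0) (val (m-1)) (hvalmem _)
        (le_of_lt (hvalstrict 0 (m-1) h0 (le_refl _)))
  have hsum : |c₀| + (Hn 0 - Hn (m-1))/2 ≤ 2 := by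
    rcases abs_cases c₀ with ⟨heq, _⟩ | ⟨heq, _⟩ <;>
      (rw [heq]; rw [hc₀]; simp [hHn] at hH0 hHm ⊢; linarith [hH0.1, hH0.2, hHm.1, hHm.2])
  calc |c₀ * (∑ t, sgn (1 - P t) * w t)
        + (1/2) * ∑ k ∈ Finset.range (m-1),
            (Hn k - Hn (k+1)) * (∑ t, sgn (val k - P t) * w t)|
      ≤ |c₀ * (∑ t, sgn (1 - P t) * w t)|
        + |(1/2) * ∑ k ∈ Finset.range (m-1),
            (Hn k - Hn (k+1)) * (∑ t, sgn (val k - P t) * w t)| := abs_add_le _ _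
    _ ≤ |c₀| * A + (1/2) * ((Hn 0 - Hn (m-1)) * A) := by
        rw [abs_mul, abs_mul, abs_of_nonneg (by norm_num : (0:ℝ) ≤ 1/2)]
        exact add_le_add
          (mul_le_mul_of_nonneg_left (hSb 1 ⟨zero_le_one, le_refl _⟩) (abs_nonneg _))
          (mul_le_mul_of_nonneg_left hb2 (by norm_num))
    _ ≤ 2 * A := by nlinarith


/-- threshold-weighted calibration error ≤ proper calibration
error ≤ 2 · threshold-weighted calibration error. -/
theorem thresholdCal_le_properCal_le_two_thresholdCal {X : Type*} (T : ℕ)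
    (p : Fin T → X → ℝ) (x : Fin T → X) (y : Fin T → ℝ)
    (hp : ∀ t, p t (x t) ∈ Icc (0:ℝ) 1)
    (hy : ∀ t, y t ∈ ({0, 1} : Set ℝ)) :
    sSup { s : ℝ | ∃ v ∈ Icc (0:ℝ) 1,
        s = |∑ t, sgn (v - p t (x t)) * (y t - p t (x t))| } ≤
      sSup { s : ℝ | ∃ ℓ : ℝ → ℝ → ℝ,
        (∀ q ∈ Icc (0:ℝ) 1, ∀ b ∈ ({0, 1} : Set ℝ), ℓ q b ∈ Icc (-1:ℝ) 1) ∧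
        (∀ v ∈ Icc (0:ℝ) 1, ∀ q ∈ Icc (0:ℝ) 1,
          v * ℓ v 1 + (1 - v) * ℓ v 0 ≤ v * ℓ q 1 + (1 - v) * ℓ q 0) ∧
        s = |∑ t, (ℓ (p t (x t)) 1 - ℓ (p t (x t)) 0) * (y t - p t (x t))| }
    ∧
    sSup { s : ℝ | ∃ ℓ : ℝ → ℝ → ℝ,
        (∀ q ∈ Icc (0:ℝ) 1, ∀ b ∈ ({0, 1} : Set ℝ), ℓ q b ∈ Icc (-1:ℝ) 1) ∧
        (∀ v ∈ Icc (0:ℝ) 1, ∀ q ∈ Icc (0:ℝ) 1,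
          v * ℓ v 1 + (1 - v) * ℓ v 0 ≤ v * ℓ q 1 + (1 - v) * ℓ q 0) ∧
        s = |∑ t, (ℓ (p t (x t)) 1 - ℓ (p t (x t)) 0) * (y t - p t (x t))| } ≤
      2 * sSup { s : ℝ | ∃ v ∈ Icc (0:ℝ) 1,
        s = |∑ t, sgn (v - p t (x t)) * (y t - p t (x t))| } := by
  have habs_sgn : ∀ z : ℝ, |sgn z| = 1 := by
    intro z; unfold sgn; split_ifs <;> norm_num
  have hw : ∀ t, |y t - p t (x t)| ≤ 1 := by
    intro t
    have hpt := hp t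
    rcases hy t with h | h
    · rw [h]; rw [abs_le]; constructor <;> [linarith [hpt.2]; linarith [hpt.1]]
    · simp only [Set.mem_singleton_iff] at h
      rw [h]; rw [abs_le]; constructor <;> [linarith [hpt.2]; linarith [hpt.1]]
  set SA := { s : ℝ | ∃ v ∈ Icc (0:ℝ) 1,
      s = |∑ t, sgn (v - p t (x t)) * (y t - p t (x t))| } with hSA
  set SB := { s : ℝ | ∃ ℓ : ℝ → ℝ → ℝ,
      (∀ q ∈ Icc (0:ℝ) 1, ∀ b ∈ ({0, 1} : Set ℝ), ℓ q b ∈ Icc (-1:ℝ) 1) ∧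
      (∀ v ∈ Icc (0:ℝ) 1, ∀ q ∈ Icc (0:ℝ) 1,
        v * ℓ v 1 + (1 - v) * ℓ v 0 ≤ v * ℓ q 1 + (1 - v) * ℓ q 0) ∧
      s = |∑ t, (ℓ (p t (x t)) 1 - ℓ (p t (x t)) 0) * (y t - p t (x t))| } with hSB
  have h1mem : (1:ℝ) ∈ ({0,1} : Set ℝ) := by simp
  have h0mem : (0:ℝ) ∈ ({0,1} : Set ℝ) := by simp
  have hbddA : BddAbove SA := by
    refine ⟨T, ?_⟩
    rintro s ⟨v, hv, rfl⟩
    calc |∑ t, sgn (v - p t (x t)) * (y t - p t (x t))|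
        ≤ ∑ t, |sgn (v - p t (x t)) * (y t - p t (x t))| :=
          Finset.abs_sum_le_sum_abs _ _
      _ ≤ ∑ _t : Fin T, (1:ℝ) := by
          apply Finset.sum_le_sum
          intro t _
          rw [abs_mul, habs_sgn, one_mul]
          exact hw t
      _ = T := by simp
  have hbddB : BddAbove SB := by
    refine ⟨2 * T, ?_⟩
    rintro s ⟨ℓ, hb, _, rfl⟩
    calc |∑ t, (ℓ (p t (x t)) 1 - ℓ (p t (x t)) 0) * (y t - p t (x t))|
        ≤ ∑ t, |(ℓ (p t (x t)) 1 - ℓ (p t (x t)) 0) * (y t - p t (x t))| :=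
          Finset.abs_sum_le_sum_abs _ _
      _ ≤ ∑ _t : Fin T, (2:ℝ) := by
          apply Finset.sum_le_sum
          intro t _
          rw [abs_mul]
          have h1 := hb _ (hp t) 1 h1mem
          have h0 := hb _ (hp t) 0 h0mem
          rw [Set.mem_Icc] at h1 h0
          have hΔ : |ℓ (p t (x t)) 1 - ℓ (p t (x t)) 0| ≤ 2 := by
            rw [abs_le]; constructor <;> linarith [h1.1, h1.2, h0.1, h0.2]
          calc |ℓ (p t (x t)) 1 - ℓ (p t (x t)) 0| * |y t - p t (x t)|
              ≤ 2 * 1 := mul_le_mul hΔ (hw t) (abs_nonneg _) (by norm_num)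
            _ = 2 := by norm_num
      _ = 2 * T := by simp [mul_comm]
  have hA_ub : ∀ v ∈ Icc (0:ℝ) 1,
      |∑ t, sgn (v - p t (x t)) * (y t - p t (x t))| ≤ sSup SA := by
    intro v hv
    exact le_csSup hbddA ⟨v, hv, rfl⟩
  have hAnn : 0 ≤ sSup SA :=
    le_trans (abs_nonneg _) (hA_ub 1 ⟨zero_le_one, le_refl _⟩)
  have hBnn : 0 ≤ sSup SB := by
    have : (0:ℝ) ∈ SB := by
      refine ⟨fun _ _ => 0, ?_, ?_, ?_⟩
      · intro q _ b _; constructor <;> norm_num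
      · intro v _ q _; norm_num
      · simp
    exact le_csSup hbddB this
  constructor
  · apply Real.sSup_le ?_ hBnn
    rintro s ⟨v, hv, rfl⟩
    apply le_csSup hbddB
    refine ⟨fun q b => (b - v) * sgn (v - q), ?_, ?_, ?_⟩
    · intro q hq b hb
      have : |(b - v) * sgn (v - q)| ≤ 1 := by
        rw [abs_mul, habs_sgn, mul_one, abs_le]
        rcases hb with h | h
        · rw [h]; constructor <;> linarith [hv.1, hv.2]
        · simp only [Set.mem_singleton_iff] at h
          rw [h]; constructor <;> linarith [hv.1, hv.2]
      exact Set.mem_Icc.mpr (abs_le.mp this)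
    · intro u _ q _
      simp only []
      unfold sgn
      split_ifs <;> nlinarith
    · apply congrArg
      apply Finset.sum_congr rfl
      intro t _
      ring
  · apply Real.sSup_le ?_ (mul_nonneg (by norm_num) hAnn)
    rintro s ⟨ℓ, hbd, hprop, rfl⟩
    have hanti : ∀ a ∈ Icc (0:ℝ) 1, ∀ b ∈ Icc (0:ℝ) 1, a ≤ b →
        ℓ b 1 - ℓ b 0 ≤ ℓ a 1 - ℓ a 0 := by
      intro a ha b hb hab
      rcases eq_or_lt_of_le hab with h | h
      · rw [h]
      · have i1 := hprop a ha b hb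
        have i2 := hprop b hb a ha
        nlinarith
    have hΔbd : ∀ a ∈ Icc (0:ℝ) 1, |ℓ a 1 - ℓ a 0| ≤ 2 := by
      intro a ha
      have h1 := hbd a ha 1 h1mem
      have h0 := hbd a ha 0 h0mem
      rw [Set.mem_Icc] at h1 h0
      rw [abs_le]; constructor <;> linarith [h1.1, h1.2, h0.1, h0.2]
    exact key T (fun t => p t (x t)) (fun t => y t - p t (x t)) hp
      (fun q => ℓ q 1 - ℓ q 0) hanti hΔbd (sSup SA) hA_ub
end

section
/- Suppose a sequence of T predictions p_t and context-outcome pairs (x_t, y_t) with y_t ∈ {0,1} satisfies, for every loss ℓ in a class L and every hypothesis h in a class H: PCalErr + (ΔL∘H)-MAErr bounds omniprediction regret. Formally: max over h ∈ H, ℓ ∈ L of Σ_{t=1}^T [ℓ(k_ℓ(p_t(x_t)), y_t) − ℓ(h(x_t), y_t)] is at most sup over proper losses ℓ' of |Σ_t Δℓ'(p_t(x_t))(y_t − p_t(x_t))| plus max over ℓ ∈ L, h ∈ H of |Σ_t Δℓ(h(x_t))(y_t − p_t(x_t))|. -/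
open Set Finset

/-! Write `Δℓ(q) = ℓ(q,1) − ℓ(q,0)`, so that `ℓ(q,y) = ℓ(q,0) + y·Δℓ(q)` for `y ∈ {0,1}`. Since
`k_ℓ(p)` minimises the expected loss under `Ber(p)`, each round's regret against `h` satisfies
`ℓ(k_ℓ(p),y) − ℓ(h,y) ≤ Δℓ(k_ℓ(p))·(y − p) − Δℓ(h)·(y − p)`. Summing over the rounds, the first
sum is the calibration residual of the proper loss `ℓ ∘ k_ℓ` and the second the multiaccuracy
residual of `Δℓ ∘ h`; both families of residuals are bounded by `2T`, so their suprema are finite. -/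

def IsBoundedLoss (ℓ : ℝ → ℝ → ℝ) : Prop :=
  ∀ q ∈ Icc (0:ℝ) 1, ∀ b ∈ ({0, 1} : Set ℝ), ℓ q b ∈ Icc (-1:ℝ) 1

lemma IsBoundedLoss.abs_sub_le {ℓ : ℝ → ℝ → ℝ} (hℓ : IsBoundedLoss ℓ) {q : ℝ}
    (hq : q ∈ Icc (0:ℝ) 1) : |ℓ q 1 - ℓ q 0| ≤ 2 := by
  obtain ⟨h1l, h1u⟩ := hℓ q hq 1 (by simp)
  obtain ⟨h0l, h0u⟩ := hℓ q hq 0 (by simp)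
  rw [abs_le]
  constructor <;> linarith

lemma abs_sub_le_one_of_mem_pair {y v : ℝ} (hy : y ∈ ({0, 1} : Set ℝ)) (hv : v ∈ Icc (0:ℝ) 1) :
    |y - v| ≤ 1 := by
  obtain ⟨hvl, hvu⟩ := hv
  rcases hy with rfl | rfl <;> rw [abs_le] <;> constructor <;> linarith

lemma abs_sum_mul_le_card_mul {ι : Type*} [Fintype ι] {a b : ι → ℝ} {A B : ℝ}
    (ha : ∀ i, |a i| ≤ A) (hb : ∀ i, |b i| ≤ B) :
    |∑ i, a i * b i| ≤ Fintype.card ι * (A * B) := by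
  calc |∑ i, a i * b i| ≤ ∑ i, |a i * b i| := abs_sum_le_sum_abs _ _
    _ ≤ ∑ _i : ι, A * B := by
        gcongr with i
        rw [abs_mul]
        exact mul_le_mul (ha i) (hb i) (abs_nonneg _) ((abs_nonneg _).trans (ha i))
    _ = Fintype.card ι * (A * B) := by simp

lemma IsBoundedLoss.abs_sum_residual_le {ι : Type*} [Fintype ι] {ℓ : ℝ → ℝ → ℝ}
    (hℓ : IsBoundedLoss ℓ) {q r : ι → ℝ} (hq : ∀ i, q i ∈ Icc (0:ℝ) 1) (hr : ∀ i, |r i| ≤ 1) :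
    |∑ i, (ℓ (q i) 1 - ℓ (q i) 0) * r i| ≤ 2 * Fintype.card ι := by
  simpa [mul_comm] using abs_sum_mul_le_card_mul (fun i => hℓ.abs_sub_le (hq i)) hr

/-- The one-round regret bound: on outcomes `y ∈ {0,1}` the loss is affine in `y`, and the
difference of the two expected losses under `Ber(v)` is the value of that affine map at `y = v`. -/
lemma loss_sub_loss_le_of_expected_le {ℓ : ℝ → ℝ → ℝ} {a b v y : ℝ} (hy : y ∈ ({0, 1} : Set ℝ))
    (hab : v * ℓ a 1 + (1 - v) * ℓ a 0 ≤ v * ℓ b 1 + (1 - v) * ℓ b 0) :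
    ℓ a y - ℓ b y ≤ (ℓ a 1 - ℓ a 0) * (y - v) - (ℓ b 1 - ℓ b 0) * (y - v) := by
  rcases hy with rfl | rfl <;> linarith

/-- proper calibration error plus `(ΔL ∘ H)`-multiaccuracy error
bounds the omniprediction regret: for every `ℓ ∈ L` and `h ∈ H`,
`Σ_t [ℓ(k_ℓ(p_t(x_t)), y_t) − ℓ(h(x_t), y_t)] ≤ PCalErr + MAErr`. -/
theorem omniprediction_regret_le_pcal_add_ma {X : Type*} (T : ℕ)
    (L : Set (ℝ → ℝ → ℝ)) (H : Set (X → ℝ))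
    (p : Fin T → X → ℝ) (x : Fin T → X) (y : Fin T → ℝ)
    (hp : ∀ t, p t (x t) ∈ Icc (0:ℝ) 1)
    (hy : ∀ t, y t ∈ ({0, 1} : Set ℝ))
    (hL : ∀ ℓ ∈ L, ∀ q ∈ Icc (0:ℝ) 1, ∀ b ∈ ({0, 1} : Set ℝ), ℓ q b ∈ Icc (-1:ℝ) 1)
    (hH : ∀ h ∈ H, ∀ z : X, h z ∈ Icc (0:ℝ) 1)
    (k : (ℝ → ℝ → ℝ) → ℝ → ℝ)
    (hk : ∀ ℓ ∈ L, ∀ v ∈ Icc (0:ℝ) 1, k ℓ v ∈ Icc (0:ℝ) 1 ∧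
      ∀ q ∈ Icc (0:ℝ) 1,
        v * ℓ (k ℓ v) 1 + (1 - v) * ℓ (k ℓ v) 0 ≤ v * ℓ q 1 + (1 - v) * ℓ q 0) :
    ∀ ℓ ∈ L, ∀ h ∈ H,
      (∑ t, (ℓ (k ℓ (p t (x t))) (y t) - ℓ (h (x t)) (y t))) ≤
        sSup { s : ℝ | ∃ ℓ' : ℝ → ℝ → ℝ,
          (∀ q ∈ Icc (0:ℝ) 1, ∀ b ∈ ({0, 1} : Set ℝ), ℓ' q b ∈ Icc (-1:ℝ) 1) ∧
          (∀ v ∈ Icc (0:ℝ) 1, ∀ q ∈ Icc (0:ℝ) 1,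
            v * ℓ' v 1 + (1 - v) * ℓ' v 0 ≤ v * ℓ' q 1 + (1 - v) * ℓ' q 0) ∧
          s = |∑ t, (ℓ' (p t (x t)) 1 - ℓ' (p t (x t)) 0) * (y t - p t (x t))| }
        +
        sSup { s : ℝ | ∃ ℓ'' ∈ L, ∃ h' ∈ H,
          s = |∑ t, (ℓ'' (h' (x t)) 1 - ℓ'' (h' (x t)) 0) * (y t - p t (x t))| } := by
  intro ℓ hℓ h hh
  have hres : ∀ t, |y t - p t (x t)| ≤ 1 := fun t => abs_sub_le_one_of_mem_pair (hy t) (hp t)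
  have hproper : IsBoundedLoss (fun q b => ℓ (k ℓ q) b) :=
    fun q hq b hb => hL ℓ hℓ _ (hk ℓ hℓ q hq).1 b hb
  calc (∑ t, (ℓ (k ℓ (p t (x t))) (y t) - ℓ (h (x t)) (y t)))
      ≤ ∑ t, ((ℓ (k ℓ (p t (x t))) 1 - ℓ (k ℓ (p t (x t))) 0) * (y t - p t (x t))
          - (ℓ (h (x t)) 1 - ℓ (h (x t)) 0) * (y t - p t (x t))) :=
        sum_le_sum fun t _ => loss_sub_loss_le_of_expected_le (hy t)
          ((hk ℓ hℓ _ (hp t)).2 _ (hH h hh _))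
    _ ≤ |∑ t, (ℓ (k ℓ (p t (x t))) 1 - ℓ (k ℓ (p t (x t))) 0) * (y t - p t (x t))|
          + |∑ t, (ℓ (h (x t)) 1 - ℓ (h (x t)) 0) * (y t - p t (x t))| := by
        rw [sum_sub_distrib]
        exact (le_abs_self _).trans (abs_sub _ _)
    _ ≤ _ := by
        refine add_le_add (le_csSup ⟨2 * T, ?_⟩ ⟨_, hproper,
          fun v hv q hq => (hk ℓ hℓ v hv).2 _ (hk ℓ hℓ q hq).1, rfl⟩)
          (le_csSup ⟨2 * T, ?_⟩ ⟨ℓ, hℓ, h, hh, rfl⟩)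
        · rintro _ ⟨ℓ', hℓ', -, rfl⟩
          simpa only [Fintype.card_fin] using IsBoundedLoss.abs_sum_residual_le hℓ' hp hres
        · rintro _ ⟨ℓ'', hℓ'', h', hh', rfl⟩
          simpa only [Fintype.card_fin] using
            IsBoundedLoss.abs_sum_residual_le (hL ℓ'' hℓ'') (fun t => hH h' hh' (x t)) hres
end

section
/- Every 2-Lipschitz function f : [0,1] → [-1,1] can be 2ε-approximated in sup norm by a linear combination of at most ⌈1/ε⌉ + 1 threshold functions at grid points {0, ε, 2ε, ...}, with coefficient ℓ1-norm at most 2. -/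
open Set Finset

/-- every 2-Lipschitz `f : [0,1] → [-1,1]` can be `2ε`-approximated
in sup norm by a linear combination of the `⌈1/ε⌉ + 1` threshold functions at
grid points `iε` (`g_i(x) = 1` if `x ≥ iε`, `-1` otherwise), with coefficient
`ℓ1`-norm at most 2. -/
theorem lipschitz_threshold_basis
    (f : ℝ → ℝ)
    (hb : ∀ x ∈ Icc (0:ℝ) 1, f x ∈ Icc (-1:ℝ) 1)
    (hlip : ∀ x ∈ Icc (0:ℝ) 1, ∀ z ∈ Icc (0:ℝ) 1, |f x - f z| ≤ 2 * |x - z|)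
    (ε : ℝ) (hε : 0 < ε) :
    ∃ c : ℕ → ℝ,
      (∑ i ∈ Finset.range (⌈1 / ε⌉₊ + 1), |c i|) ≤ 2 ∧
      ∀ x ∈ Icc (0:ℝ) 1,
        |f x - ∑ i ∈ Finset.range (⌈1 / ε⌉₊ + 1),
          c i * (if (i : ℝ) * ε ≤ x then (1:ℝ) else -1)| ≤ 2 * ε := by
  set N := ⌈1 / ε⌉₊ with hN
  set p : ℕ → ℝ := fun i => min ((i : ℝ) * ε) 1 with hp
  have hp0 : p 0 = 0 := by simp [hp]
  have hpmem : ∀ i, p i ∈ Icc (0:ℝ) 1 := by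
    intro i
    constructor
    · exact le_min (by positivity) zero_le_one
    · exact min_le_right _ _
  have hpmono : Monotone p := by
    intro i j hij
    exact min_le_min (by
      have : (i:ℝ) ≤ j := by exact_mod_cast hij
      nlinarith) le_rfl
  have hpN : p N = 1 := by
    have h1 : (1:ℝ)/ε ≤ N := Nat.le_ceil _
    have : (1:ℝ) ≤ (N:ℝ) * ε := by
      rw [div_le_iff₀ hε] at h1; linarith
    simp [hp, min_eq_right this]
  set c : ℕ → ℝ := fun i =>
    if i = 0 then (f 0 + f 1) / 2 else (f (p i) - f (p (i - 1))) / 2 with hc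
  -- partial sums of c telescope
  have hsum : ∀ m : ℕ, ∑ i ∈ Finset.range (m + 1), c i = (f 1 + f (p m)) / 2 := by
    intro m
    induction m with
    | zero => simp [hc, hp0]; ring
    | succ m ih =>
        rw [Finset.sum_range_succ, ih]
        simp only [hc, Nat.succ_ne_zero, if_false, Nat.add_sub_cancel]
        ring
  have h01 : (0:ℝ) ∈ Icc (0:ℝ) 1 := by constructor <;> norm_num
  have h11 : (1:ℝ) ∈ Icc (0:ℝ) 1 := by constructor <;> norm_num
  refine ⟨c, ?_, ?_⟩
  · -- ℓ1 bound
    have key : ∀ m : ℕ, ∑ i ∈ Finset.range (m + 1), |c i| ≤ 1 + (p m - p 0) := by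
      intro m
      induction m with
      | zero =>
          have h0 := hb 0 h01
          have h1 := hb 1 h11
          simp only [zero_add, Finset.sum_range_one, hc, if_pos rfl, hp0, sub_self, add_zero, eq_self_iff_true, if_true]
          rw [abs_div, abs_two]
          rw [div_le_one (by norm_num)]
          calc |f 0 + f 1| ≤ |f 0| + |f 1| := abs_add_le _ _
            _ ≤ 1 + 1 := by
                gcongr
                · exact abs_le.mpr ⟨h0.1, h0.2⟩
                · exact abs_le.mpr ⟨h1.1, h1.2⟩
            _ = 2 := by norm_num
      | succ m ih =>
          rw [Finset.sum_range_succ]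
          have hstep : |c (m + 1)| ≤ p (m + 1) - p m := by
            simp only [hc, Nat.succ_ne_zero, if_false, Nat.add_sub_cancel]
            rw [abs_div, abs_two, div_le_iff₀ (by norm_num)]
            have := hlip (p (m+1)) (hpmem _) (p m) (hpmem _)
            have hmon : p m ≤ p (m + 1) := hpmono (Nat.le_succ m)
            rw [abs_of_nonneg (sub_nonneg.mpr hmon)] at this
            linarith
          have hmon : p m ≤ p (m + 1) := hpmono (Nat.le_succ m)
          linarith
    have := key N
    rw [hpN, hp0] at this
    linarith
  · intro x hx
    set k := ⌊x / ε⌋₊ with hk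
    have hxε : 0 ≤ x / ε := div_nonneg hx.1 hε.le
    have hkle : k ≤ N := by
      have h1 : x / ε ≤ 1 / ε := by gcongr; exact hx.2
      calc k ≤ ⌊1 / ε⌋₊ := Nat.floor_mono h1
        _ ≤ N := Nat.floor_le_ceil _
    have hkx : (k : ℝ) * ε ≤ x := by
      have := Nat.floor_le hxε
      calc (k:ℝ) * ε ≤ (x / ε) * ε := by gcongr
        _ = x := div_mul_cancel₀ x hε.ne'
    have hiff : ∀ i : ℕ, ((i : ℝ) * ε ≤ x) ↔ i ≤ k := by
      intro i
      constructor
      · intro h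
        apply Nat.le_floor
        rw [le_div_iff₀ hε]; exact h
      · intro h
        calc (i:ℝ) * ε ≤ (k:ℝ) * ε :=
              mul_le_mul_of_nonneg_right (by exact_mod_cast h) hε.le
          _ ≤ x := hkx
    have hgi : ∀ i : ℕ, c i * (if (i : ℝ) * ε ≤ x then (1:ℝ) else -1)
        = 2 * (if i ≤ k then c i else 0) - c i := by
      intro i
      by_cases h : i ≤ k
      · rw [if_pos ((hiff i).mpr h), if_pos h]; ring
      · rw [if_neg (fun hh => h ((hiff i).mp hh)), if_neg h]; ring
    have hsplit : ∑ i ∈ Finset.range (N + 1), (if i ≤ k then c i else 0)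
        = ∑ i ∈ Finset.range (k + 1), c i := by
      rw [← Finset.sum_subset (Finset.range_subset_range.mpr (Nat.add_le_add_right hkle 1))
        (fun i _ hni => if_neg (by simp at hni; omega))]
      exact Finset.sum_congr rfl (fun i hi => if_pos (by simp at hi; omega))
    have hpk : p k = (k : ℝ) * ε := min_eq_left (hkx.trans hx.2)
    have hmain : ∑ i ∈ Finset.range (N + 1),
        c i * (if (i : ℝ) * ε ≤ x then (1:ℝ) else -1) = f ((k:ℝ) * ε) := by
      calc ∑ i ∈ Finset.range (N + 1), c i * (if (i : ℝ) * ε ≤ x then (1:ℝ) else -1)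
          = ∑ i ∈ Finset.range (N + 1), (2 * (if i ≤ k then c i else 0) - c i) :=
            Finset.sum_congr rfl (fun i _ => hgi i)
        _ = 2 * (∑ i ∈ Finset.range (N + 1), (if i ≤ k then c i else 0))
            - ∑ i ∈ Finset.range (N + 1), c i := by
            rw [Finset.sum_sub_distrib, Finset.mul_sum]
        _ = 2 * ((f 1 + f (p k)) / 2) - (f 1 + f (p N)) / 2 := by
            rw [hsplit, hsum k, hsum N]
        _ = f ((k:ℝ) * ε) := by rw [hpN, hpk]; ring
    rw [hmain]
    have hkε : (k:ℝ) * ε ∈ Icc (0:ℝ) 1 := ⟨by positivity, hkx.trans hx.2⟩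
    have hclose : |x - (k:ℝ) * ε| ≤ ε := by
      have hlt : x < ((k:ℝ) + 1) * ε := by
        have := Nat.lt_floor_add_one (x / ε)
        rw [div_lt_iff₀ hε] at this
        exact_mod_cast this
      rw [abs_of_nonneg (by linarith)]
      nlinarith
    have := hlip x hx ((k:ℝ) * ε) hkε
    nlinarith
end

section
/- In the halfspace-approachability strategy for proper calibration, suppose f : [0,1] → [-1,1] is any function on the grid {0, 1/T, ..., 1} and q_i, q_{i+1} = q_i + 1/T are adjacent grid points with f(q_i)·f(q_{i+1}) ≤ 0. If a prediction p is chosen to be q_i with probability |f(q_{i+1})|/(|f(q_i)|+|f(q_{i+1})|) and q_{i+1} otherwise, then for every y ∈ {0,1}, E_p[f(p)·(y − p)] ≤ 1/T. -/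
open Set

/-- halfspace approachability strategy for proper calibration.
If `q₂ = q₁ + 1/T`, `|f(q₁)|, |f(q₂)| ≤ 1`, `f(q₁)·f(q₂) ≤ 0`, and `p` is
chosen to be `q₁` with probability `|f(q₂)|/(|f(q₁)|+|f(q₂)|)` and `q₂`
otherwise, then for every `y ∈ {0,1}`, `E_p[f(p)·(y − p)] ≤ 1/T`. -/
theorem two_point_randomization_bound (T : ℕ) (hT : 0 < T)
    (f : ℝ → ℝ) (q₁ q₂ y : ℝ)
    (hq : q₂ = q₁ + 1 / T)
    (hf1 : |f q₁| ≤ 1) (hf2 : |f q₂| ≤ 1)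
    (hsign : f q₁ * f q₂ ≤ 0)
    (hy : y ∈ ({0, 1} : Set ℝ)) :
    (|f q₂| * (f q₁ * (y - q₁)) + |f q₁| * (f q₂ * (y - q₂))) /
        (|f q₁| + |f q₂|) ≤ 1 / T := by
  have hTpos : (0:ℝ) < 1 / T := by positivity
  have key : |f q₂| * f q₁ + |f q₁| * f q₂ = 0 := by
    rcases abs_cases (f q₁) with ⟨e1, s1⟩ | ⟨e1, s1⟩ <;>
      rcases abs_cases (f q₂) with ⟨e2, s2⟩ | ⟨e2, s2⟩ <;>
      rw [e1, e2] <;> nlinarith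
  have hnum : |f q₂| * (f q₁ * (y - q₁)) + |f q₁| * (f q₂ * (y - q₂))
      = (1 / T) * (|f q₂| * f q₁) := by
    linear_combination (y - q₂) * key + (|f q₂| * f q₁) * hq
  rw [hnum]
  rcases eq_or_lt_of_le (by positivity : (0:ℝ) ≤ |f q₁| + |f q₂|) with h | h
  · rw [← h]; simpa using le_of_lt hTpos
  · rw [div_le_iff₀ h]
    have hb := abs_nonneg (f q₂)
    have ha := le_abs_self (f q₁)
    have haa := abs_nonneg (f q₁)
    have h1 : |f q₂| * f q₁ ≤ |f q₁| + |f q₂| := by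
      nlinarith [mul_le_mul_of_nonneg_left ha hb]
    exact mul_le_mul_of_nonneg_left h1 hTpos.le
end

section
/- U-calibration is bounded by twice the proper calibration error: for any sequence of predictions p_1,...,p_T ∈ [0,1] and outcomes y_1,...,y_T ∈ {0,1}, letting p* = (1/T)Σ_t y_t, one has sup over proper losses ℓ of Σ_t [ℓ(p_t, y_t) − ℓ(p*, y_t)] ≤ 2 · sup over proper losses ℓ of |Σ_t Δℓ(p_t)·(y_t − p_t)|. -/
open Set Finset

/-- U-calibration error is at most twice the proper calibration
error.  `p* = (1/T)·Σ_t y_t`; both suprema range over proper losses bounded in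
`[-1,1]`. -/
theorem ucal_le_two_properCal (T : ℕ) (hT : 0 < T)
    (p y : Fin T → ℝ)
    (hp : ∀ t, p t ∈ Icc (0:ℝ) 1)
    (hy : ∀ t, y t ∈ ({0, 1} : Set ℝ)) :
    sSup { s : ℝ | ∃ ℓ : ℝ → ℝ → ℝ,
        (∀ q ∈ Icc (0:ℝ) 1, ∀ b ∈ ({0, 1} : Set ℝ), ℓ q b ∈ Icc (-1:ℝ) 1) ∧
        (∀ v ∈ Icc (0:ℝ) 1, ∀ q ∈ Icc (0:ℝ) 1,
          v * ℓ v 1 + (1 - v) * ℓ v 0 ≤ v * ℓ q 1 + (1 - v) * ℓ q 0) ∧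
        s = ∑ t, (ℓ (p t) (y t) - ℓ ((∑ t', y t') / T) (y t)) }
    ≤ 2 * sSup { s : ℝ | ∃ ℓ : ℝ → ℝ → ℝ,
        (∀ q ∈ Icc (0:ℝ) 1, ∀ b ∈ ({0, 1} : Set ℝ), ℓ q b ∈ Icc (-1:ℝ) 1) ∧
        (∀ v ∈ Icc (0:ℝ) 1, ∀ q ∈ Icc (0:ℝ) 1,
          v * ℓ v 1 + (1 - v) * ℓ v 0 ≤ v * ℓ q 1 + (1 - v) * ℓ q 0) ∧
        s = |∑ t, (ℓ (p t) 1 - ℓ (p t) 0) * (y t - p t)| } := by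
  set B := { s : ℝ | ∃ ℓ : ℝ → ℝ → ℝ,
        (∀ q ∈ Icc (0:ℝ) 1, ∀ b ∈ ({0, 1} : Set ℝ), ℓ q b ∈ Icc (-1:ℝ) 1) ∧
        (∀ v ∈ Icc (0:ℝ) 1, ∀ q ∈ Icc (0:ℝ) 1,
          v * ℓ v 1 + (1 - v) * ℓ v 0 ≤ v * ℓ q 1 + (1 - v) * ℓ q 0) ∧
        s = |∑ t, (ℓ (p t) 1 - ℓ (p t) 0) * (y t - p t)| } with hBdef
  -- p* ∈ [0,1]
  have hyb : ∀ t, 0 ≤ y t ∧ y t ≤ 1 := by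
    intro t
    have h := hy t
    simp only [Set.mem_insert_iff, Set.mem_singleton_iff] at h
    rcases h with h | h <;> simp [h]
  have hTpos : (0:ℝ) < T := by exact_mod_cast hT
  have hps : ((∑ t', y t') / T) ∈ Icc (0:ℝ) 1 := by
    constructor
    · apply div_nonneg _ hTpos.le
      exact Finset.sum_nonneg fun t _ => (hyb t).1
    · rw [div_le_one hTpos]
      calc ∑ t', y t' ≤ ∑ _t' : Fin T, (1:ℝ) :=
            Finset.sum_le_sum fun t _ => (hyb t).2
        _ = T := by simp
  -- B is bounded above
  have hBdd : BddAbove B := by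
    refine ⟨2 * T, ?_⟩
    rintro s ⟨ℓ, hbd, _, rfl⟩
    calc |∑ t, (ℓ (p t) 1 - ℓ (p t) 0) * (y t - p t)|
        ≤ ∑ t, |(ℓ (p t) 1 - ℓ (p t) 0) * (y t - p t)| :=
          Finset.abs_sum_le_sum_abs _ _
      _ ≤ ∑ _t : Fin T, (2:ℝ) := by
          apply Finset.sum_le_sum
          intro t _
          rw [abs_mul]
          have h1 := hbd (p t) (hp t) 1 (by simp)
          have h0 := hbd (p t) (hp t) 0 (by simp)
          have hy1 := (hyb t).1; have hy2 := (hyb t).2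
          have hp1 := (hp t).1; have hp2 := (hp t).2
          have : |ℓ (p t) 1 - ℓ (p t) 0| ≤ 2 := by
            rw [abs_le]; constructor <;> [linarith [h1.1, h0.2]; linarith [h1.2, h0.1]]
          have : |y t - p t| ≤ 1 := by
            rw [abs_le]; constructor <;> linarith
          nlinarith [abs_nonneg (ℓ (p t) 1 - ℓ (p t) 0), abs_nonneg (y t - p t)]
      _ = 2 * T := by simp [mul_comm]
  have h0B : (0:ℝ) ∈ B := by
    refine ⟨fun _ _ => 0, ?_, ?_, ?_⟩ <;> simp
  have hBnn : 0 ≤ sSup B := le_csSup hBdd h0B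
  apply Real.sSup_le _ (by linarith)
  rintro s ⟨ℓ, hbd, hprop, rfl⟩
  set q : ℝ := (∑ t', y t') / T with hq
  set c : ℝ := ℓ q 1 - ℓ q 0 with hc
  -- pointwise bound
  have hpt : ∀ t, ℓ (p t) (y t) - ℓ q (y t) ≤
      (y t - p t) * ((ℓ (p t) 1 - ℓ (p t) 0) - c) := by
    intro t
    have hpr := hprop (p t) (hp t) q hps
    have h := hy t
    simp only [Set.mem_insert_iff, Set.mem_singleton_iff] at h
    rcases h with h | h <;> rw [h, hc] <;> nlinarith [hpr]
  have hsum : ∑ t, (ℓ (p t) (y t) - ℓ q (y t)) ≤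
      (∑ t, (ℓ (p t) 1 - ℓ (p t) 0) * (y t - p t)) - ∑ t, c * (y t - p t) := by
    rw [← Finset.sum_sub_distrib]
    apply Finset.sum_le_sum
    intro t _
    have := hpt t
    nlinarith [hpt t]
  -- first term is in B
  have h1 : (∑ t, (ℓ (p t) 1 - ℓ (p t) 0) * (y t - p t)) ≤ sSup B := by
    refine le_trans (le_abs_self _) (le_csSup hBdd ⟨ℓ, hbd, hprop, rfl⟩)
  -- second term via constant loss
  have hcle : |c| ≤ 2 := by
    have h1 := hbd q hps 1 (by simp)
    have h0 := hbd q hps 0 (by simp)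
    rw [abs_le]; constructor <;> [linarith [h1.1, h0.2]; linarith [h1.2, h0.1]]
  have h2 : -(∑ t, c * (y t - p t)) ≤ sSup B := by
    refine le_trans (neg_le_abs _) (le_csSup hBdd ?_)
    refine ⟨fun _ b => c / 2 * (2 * b - 1), ?_, ?_, ?_⟩
    · intro q' _ b hb
      simp only [Set.mem_insert_iff, Set.mem_singleton_iff] at hb
      obtain ⟨hc1, hc2⟩ := abs_le.mp hcle
      rcases hb with h | h <;> rw [h] <;> constructor <;> norm_num <;> linarith
    · intro v _ q' _; ring_nf; exact le_refl _
    · congr 1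
      apply Finset.sum_congr rfl
      intro t _
      ring
  linarith
end

section
/- There is a sequence of predictions and binary outcomes with vanishing smooth calibration error but linear proper calibration error: for T even and ε ∈ (0, 1/2), let y_t = 1 for t > T/2 and y_t = 0 otherwise, and p_t = 1/2 − ε for t > T/2 and p_t = 1/2 + ε otherwise. Then (a) for every 1-Lipschitz weight function w : [0,1] → [-1,1], |Σ_t w(p_t)(y_t − p_t)| ≤ εT, while (b) for the weight w(p) = sgn(1/2 − p), |Σ_t w(p_t)(y_t − p_t)| ≥ T/4. -/
open Set Finset

lemma sum_if_lt (m : ℕ) (A B : ℝ) :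
    ∑ t : Fin (2 * m), (if (t : ℕ) < m then A else B) = m * A + m * B := by
  rw [Finset.sum_fin_eq_sum_range]
  have : ∀ x ∈ Finset.range (2 * m),
      (if h : x < 2 * m then (if ((⟨x, h⟩ : Fin (2 * m)) : ℕ) < m then A else B) else 0)
      = (if x < m then A else B) := by
    intro x hx
    rw [dif_pos (Finset.mem_range.mp hx)]
  rw [Finset.sum_congr rfl this, Finset.range_eq_Ico,
    ← Finset.sum_Ico_consecutive _ (Nat.zero_le m) (by omega : m ≤ 2 * m)]
  rw [Finset.sum_congr rfl (fun x hx => if_pos (Finset.mem_Ico.mp hx).2),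
    Finset.sum_congr rfl (fun x hx => if_neg (by simpa using (Finset.mem_Ico.mp hx).1.not_gt))]
  simp [Nat.card_Ico, Nat.sub_eq, two_mul]

/-- a sequence with vanishing smooth calibration error but
linear proper calibration error.  With `T = 2m` rounds, `y_t = 0, p_t = 1/2+ε`
for the first `m` rounds and `y_t = 1, p_t = 1/2-ε` for the last `m` rounds:
(a) every 1-Lipschitz weight `w : [0,1] → [-1,1]` has weighted calibration
error at most `εT`; (b) the threshold weight `w(p) = sgn(1/2 − p)` has
weighted calibration error at least `T/4`. -/
theorem smoothCal_small_properCal_large (m : ℕ) (hm : 0 < m)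
    (ε : ℝ) (hε : 0 < ε) (hε2 : ε < 1 / 2) :
    (∀ w : ℝ → ℝ,
      (∀ a ∈ Icc (0:ℝ) 1, ∀ b ∈ Icc (0:ℝ) 1, |w a - w b| ≤ |a - b|) →
      (∀ a ∈ Icc (0:ℝ) 1, w a ∈ Icc (-1:ℝ) 1) →
      |∑ t : Fin (2 * m),
          w (if (t : ℕ) < m then 1/2 + ε else 1/2 - ε) *
            ((if (t : ℕ) < m then (0:ℝ) else 1) -
              (if (t : ℕ) < m then 1/2 + ε else 1/2 - ε))| ≤ ε * (2 * m)) ∧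
    |∑ t : Fin (2 * m),
        (if 0 < (1/2 - (if (t : ℕ) < m then 1/2 + ε else 1/2 - ε))
          then (1:ℝ) else -1) *
          ((if (t : ℕ) < m then (0:ℝ) else 1) -
            (if (t : ℕ) < m then 1/2 + ε else 1/2 - ε))| ≥ (2 * m : ℝ) / 4 := by
  have hmpos : (0:ℝ) < m := by exact_mod_cast hm
  constructor
  · intro w hLip hBdd
    have key : ∀ t : Fin (2 * m),
        w (if (t : ℕ) < m then 1/2 + ε else 1/2 - ε) *
          ((if (t : ℕ) < m then (0:ℝ) else 1) -
            (if (t : ℕ) < m then 1/2 + ε else 1/2 - ε))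
        = (if (t : ℕ) < m then w (1/2 + ε) * (0 - (1/2 + ε))
            else w (1/2 - ε) * (1 - (1/2 - ε))) := by
      intro t; split_ifs <;> rfl
    rw [Finset.sum_congr rfl (fun t _ => key t), sum_if_lt]
    have hdiff : |w (1/2 - ε) - w (1/2 + ε)| ≤ 2 * ε := by
      have h1 : (1/2 - ε : ℝ) ∈ Icc (0:ℝ) 1 := by constructor <;> linarith
      have h2 : (1/2 + ε : ℝ) ∈ Icc (0:ℝ) 1 := by constructor <;> linarith
      have := hLip _ h1 _ h2
      have habs : |(1/2 - ε) - (1/2 + ε)| = 2 * ε := by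
        rw [abs_of_nonpos (by linarith)]; ring
      linarith [this, habs ▸ this]
    have heq : (m : ℝ) * (w (1/2 + ε) * (0 - (1/2 + ε))) +
        (m : ℝ) * (w (1/2 - ε) * (1 - (1/2 - ε)))
        = (m * (1/2 + ε)) * (w (1/2 - ε) - w (1/2 + ε)) := by ring
    rw [heq, abs_mul, abs_of_nonneg (by nlinarith : (0:ℝ) ≤ m * (1/2 + ε))]
    have hnn : (0:ℝ) ≤ (m:ℝ) * (1/2 + ε) := by nlinarith
    have h2 := mul_le_mul_of_nonneg_left hdiff hnn
    have h3 : (m:ℝ) * ε * ε < (m:ℝ) * ε * (1/2) :=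
      mul_lt_mul_of_pos_left hε2 (mul_pos hmpos hε)
    nlinarith
  · have key : ∀ t : Fin (2 * m),
        (if 0 < (1/2 - (if (t : ℕ) < m then 1/2 + ε else 1/2 - ε))
          then (1:ℝ) else -1) *
          ((if (t : ℕ) < m then (0:ℝ) else 1) -
            (if (t : ℕ) < m then 1/2 + ε else 1/2 - ε))
        = (if (t : ℕ) < m then (-1) * (0 - (1/2 + ε)) else 1 * (1 - (1/2 - ε))) := by
      intro t
      by_cases h : (t : ℕ) < m
      · simp only [if_pos h, if_neg (by linarith : ¬ (0:ℝ) < 1/2 - (1/2 + ε))]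
      · simp only [if_neg h, if_pos (by linarith : (0:ℝ) < 1/2 - (1/2 - ε))]
    rw [Finset.sum_congr rfl (fun t _ => key t), sum_if_lt]
    rw [abs_of_nonneg (by nlinarith)]
    nlinarith
end

section
/- Boosting potential argument: let q* : X → [0,1] and let q_{t+1} = Π(q_t + (ε/2)·f) pointwise, where Π projects onto [-1,1], f : X → [-1,1], and E[(q*(x) − q_t(x))·f(x)] ≥ ε/2 under a fixed distribution over x. Then E[(q*(x) − q_{t+1}(x))²] ≤ E[(q*(x) − q_t(x))²] − ε²/4. Consequently, starting from E[(q* − q_0)²] ≤ 2, the update can be applied at most 8/ε² times before no f with E[(q* − q_t)f] ≥ ε/2 and ||f||_∞ ≤ 1 exists. -/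
open Set MeasureTheory

private lemma bdd_integrable {X : Type*} [MeasurableSpace X]
    (μ : Measure X) [IsProbabilityMeasure μ] {g : X → ℝ} (hg : Measurable g)
    (C : ℝ) (hb : ∀ x, |g x| ≤ C) : Integrable g μ :=
  (integrable_const C).mono' hg.aestronglyMeasurable (Filter.Eventually.of_forall hb)

private lemma step_lemma {X : Type*} [MeasurableSpace X]
    (μ : Measure X) [IsProbabilityMeasure μ]
    (ε : ℝ) (hε : 0 < ε)
    (qs : X → ℝ) (hqs_meas : Measurable qs)
    (hqs_range : ∀ x : X, qs x ∈ Icc (0:ℝ) 1) :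
    ∀ qt f : X → ℝ, Measurable qt → Measurable f →
      (∀ x : X, qt x ∈ Icc (-1:ℝ) 1) → (∀ x : X, f x ∈ Icc (-1:ℝ) 1) →
      (ε / 2 ≤ ∫ x, (qs x - qt x) * f x ∂μ) →
      (∫ x, (qs x - max (-1) (min 1 (qt x + ε / 2 * f x)))^2 ∂μ) ≤
        (∫ x, (qs x - qt x)^2 ∂μ) - ε^2 / 4 := by
  intro qt f hqt hf hqtr hfr hcorr
  set h : X → ℝ := fun x => qt x + ε / 2 * f x with hh
  have hh_meas : Measurable h := hqt.add (measurable_const.mul hf)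
  -- pointwise: (qs - clamp h)^2 ≤ (qs - h)^2
  have hpt : ∀ x, (qs x - max (-1) (min 1 (h x)))^2 ≤ (qs x - h x)^2 := by
    intro x
    obtain ⟨ha0, ha1⟩ := hqs_range x
    rcases le_total (h x) (-1) with h1 | h1
    · rw [min_eq_right (by linarith), max_eq_left h1]
      nlinarith
    · rcases le_total 1 (h x) with h2 | h2
      · rw [min_eq_left h2, max_eq_right (by norm_num)]
        nlinarith
      · rw [min_eq_right h2, max_eq_right h1]
  -- integrability facts
  have hI1 : Integrable (fun x => (qs x - qt x)^2) μ := by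
    refine bdd_integrable μ ((hqs_meas.sub hqt).pow measurable_const) 4 ?_
    intro x
    obtain ⟨ha0, ha1⟩ := hqs_range x; obtain ⟨hb0, hb1⟩ := hqtr x
    rw [abs_le]; constructor <;> nlinarith
  have hI2 : Integrable (fun x => (qs x - qt x) * f x) μ := by
    refine bdd_integrable μ ((hqs_meas.sub hqt).mul hf) 2 ?_
    intro x
    obtain ⟨ha0, ha1⟩ := hqs_range x; obtain ⟨hb0, hb1⟩ := hqtr x
    obtain ⟨hc0, hc1⟩ := hfr x
    rw [abs_le]; constructor <;> nlinarith
  have hI3 : Integrable (fun x => (f x)^2) μ := by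
    refine bdd_integrable μ (hf.pow measurable_const) 1 ?_
    intro x; obtain ⟨hc0, hc1⟩ := hfr x
    rw [abs_le]; constructor <;> nlinarith
  have hIh : Integrable (fun x => (qs x - h x)^2) μ := by
    have : (fun x => (qs x - h x)^2) =
        fun x => (qs x - qt x)^2 - ε * ((qs x - qt x) * f x) + (ε/2)^2 * (f x)^2 := by
      funext x; simp only [hh]; ring
    rw [this]
    exact (hI1.sub (hI2.const_mul ε)).add (hI3.const_mul _)
  have hImono : (∫ x, (qs x - max (-1) (min 1 (h x)))^2 ∂μ) ≤ ∫ x, (qs x - h x)^2 ∂μ := by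
    refine integral_mono ?_ hIh hpt
    refine bdd_integrable μ ((hqs_meas.sub
      (measurable_const.max (measurable_const.min hh_meas))).pow measurable_const) 4 ?_
    intro x
    obtain ⟨ha0, ha1⟩ := hqs_range x
    have hm1 : (-1:ℝ) ≤ max (-1) (min 1 (h x)) := le_max_left _ _
    have hm2 : max (-1) (min 1 (h x)) ≤ 1 := max_le (by norm_num) (min_le_left _ _)
    rw [abs_le]; constructor <;> nlinarith
  have hexp : (∫ x, (qs x - h x)^2 ∂μ) =
      (∫ x, (qs x - qt x)^2 ∂μ) - ε * (∫ x, (qs x - qt x) * f x ∂μ)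
        + (ε/2)^2 * (∫ x, (f x)^2 ∂μ) := by
    have e1 : (fun x => (qs x - h x)^2) =
        fun x => ((qs x - qt x)^2 - ε * ((qs x - qt x) * f x)) + (ε/2)^2 * (f x)^2 := by
      funext x; simp only [hh]; ring
    have hIa : Integrable (fun x => (qs x - qt x)^2 - ε * ((qs x - qt x) * f x)) μ :=
      hI1.sub (hI2.const_mul ε)
    have hIb : Integrable (fun x => (ε/2)^2 * (f x)^2) μ := hI3.const_mul _
    have hIc : Integrable (fun x => ε * ((qs x - qt x) * f x)) μ := hI2.const_mul ε
    simp only [e1]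
    rw [integral_add hIa hIb, integral_sub hI1 hIc, integral_const_mul, integral_const_mul]
  have hf2 : (∫ x, (f x)^2 ∂μ) ≤ 1 := by
    calc (∫ x, (f x)^2 ∂μ) ≤ ∫ _x, (1:ℝ) ∂μ := by
          refine integral_mono hI3 (integrable_const 1) ?_
          intro x; obtain ⟨hc0, hc1⟩ := hfr x; show f x ^ 2 ≤ 1; nlinarith
      _ = 1 := by simp
  calc (∫ x, (qs x - max (-1) (min 1 (h x)))^2 ∂μ)
      ≤ (∫ x, (qs x - qt x)^2 ∂μ) - ε * (∫ x, (qs x - qt x) * f x ∂μ)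
        + (ε/2)^2 * (∫ x, (f x)^2 ∂μ) := hImono.trans_eq hexp
    _ ≤ (∫ x, (qs x - qt x)^2 ∂μ) - ε * (ε/2) + (ε/2)^2 * 1 := by
        have h1 : ε * (ε/2) ≤ ε * (∫ x, (qs x - qt x) * f x ∂μ) :=
          mul_le_mul_of_nonneg_left hcorr hε.le
        have h2 : (ε/2)^2 * (∫ x, (f x)^2 ∂μ) ≤ (ε/2)^2 * 1 :=
          mul_le_mul_of_nonneg_left hf2 (sq_nonneg _)
        linarith
    _ = (∫ x, (qs x - qt x)^2 ∂μ) - ε^2 / 4 := by ring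

/-- boosting potential argument.  (First part) one update step
`q_{t+1} = Π(q_t + (ε/2)·f)` (projection onto `[-1,1]`) decreases the squared
distance to the target `q*` by at least `ε²/4`, provided
`E[(q* − q_t)·f] ≥ ε/2`.  (Second part) consequently, starting from potential
at most 2, the update can be applied at most `8/ε²` times. -/
theorem boosting_potential_argument {X : Type*} [MeasurableSpace X]
    (μ : Measure X) [IsProbabilityMeasure μ]
    (ε : ℝ) (hε : 0 < ε)
    (qs : X → ℝ) (hqs_meas : Measurable qs)
    (hqs_range : ∀ x : X, qs x ∈ Icc (0:ℝ) 1) :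
    (∀ qt f : X → ℝ, Measurable qt → Measurable f →
      (∀ x : X, qt x ∈ Icc (-1:ℝ) 1) → (∀ x : X, f x ∈ Icc (-1:ℝ) 1) →
      (ε / 2 ≤ ∫ x, (qs x - qt x) * f x ∂μ) →
      (∫ x, (qs x - max (-1) (min 1 (qt x + ε / 2 * f x)))^2 ∂μ) ≤
        (∫ x, (qs x - qt x)^2 ∂μ) - ε^2 / 4) ∧
    (∀ (n : ℕ) (q : ℕ → X → ℝ) (f : ℕ → X → ℝ),
      Measurable (q 0) → (∀ x : X, q 0 x ∈ Icc (-1:ℝ) 1) →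
      (∫ x, (qs x - q 0 x)^2 ∂μ) ≤ 2 →
      (∀ t < n, Measurable (f t) ∧ (∀ x : X, f t x ∈ Icc (-1:ℝ) 1) ∧
        (ε / 2 ≤ ∫ x, (qs x - q t x) * f t x ∂μ) ∧
        q (t + 1) = fun x => max (-1) (min 1 (q t x + ε / 2 * f t x))) →
      (n : ℝ) ≤ 8 / ε^2) := by
  have key := step_lemma μ ε hε qs hqs_meas hqs_range
  refine ⟨key, ?_⟩
  intro n q f hq0m hq0r hq0pot hstep
  -- invariant
  have inv : ∀ t ≤ n, Measurable (q t) ∧ (∀ x, q t x ∈ Icc (-1:ℝ) 1) ∧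
      (∫ x, (qs x - q t x)^2 ∂μ) ≤ 2 - t * (ε^2 / 4) := by
    intro t
    induction t with
    | zero => intro _; exact ⟨hq0m, hq0r, by simpa using hq0pot⟩
    | succ t ih =>
      intro hlt
      have ht : t < n := Nat.lt_of_succ_le hlt
      obtain ⟨hqm, hqr, hpot⟩ := ih ht.le
      obtain ⟨hfm, hfr, hcorr, heq⟩ := hstep t ht
      have hstepineq := key (q t) (f t) hqm hfm hqr hfr hcorr
      refine ⟨?_, ?_, ?_⟩
      · rw [heq]
        exact measurable_const.max (measurable_const.min (hqm.add (measurable_const.mul hfm)))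
      · intro x; rw [heq]
        exact ⟨le_max_left _ _, max_le (by norm_num) (min_le_left _ _)⟩
      · rw [heq]
        push_cast
        calc (∫ x, (qs x - max (-1) (min 1 (q t x + ε / 2 * f t x)))^2 ∂μ)
            ≤ (∫ x, (qs x - q t x)^2 ∂μ) - ε^2 / 4 := hstepineq
          _ ≤ 2 - t * (ε^2 / 4) - ε^2 / 4 := by linarith
          _ = 2 - (t + 1) * (ε^2 / 4) := by ring
  obtain ⟨_, _, hpot⟩ := inv n le_rfl
  have hnn : (0:ℝ) ≤ ∫ x, (qs x - q n x)^2 ∂μ :=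
    integral_nonneg fun x => sq_nonneg _
  have : (n:ℝ) * (ε^2 / 4) ≤ 2 := by linarith
  rw [le_div_iff₀ (by positivity)]
  nlinarith
end
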